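/- arXiv:2002.00697 — 2 statements merged into one kernel-verified Lean document; each statement's English description precedes it below -/
import Mathlib

section
/- The bilinear bracket on gl_{n+}^ε is alternating and satisfies the Jacobi identity; consequently gl_{n+}^ε, with this bracket, is a Lie algebra over R. -/
/-!
Let `A = R[t]/(t ^ (n + 1) - ε t)`. The `R`-linear map into `n × n` matrices over `A` sending
`x_ij ↦ t ^ λ(i,j) E_ij`, `a_i ↦ E_ii`, `b_i ↦ (2 t ^ n - ε) E_ii` carries the bracket of
`gl_{n+}^ε` to the matrix commutator: the factor `ε` in `[x_ij, x_jl]` is the relation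
`t ^ (n + r) = ε t ^ r`, used exactly when `λ(i,j) + λ(j,l) ≥ n`, and `[x_ij, x_ji]` lands on
`t ^ n (E_ii - E_jj)`. Since `1, t, …, t ^ n` are `R`-independent in `A` and `2` is invertible,
the map is injective, so the bracket is the pull-back of a Lie bracket.
-/

abbrev GlIdx (n : ℕ) : Type := { p : Fin n × Fin n // p.1 ≠ p.2 } ⊕ (Fin n ⊕ Fin n)
abbrev Gl (n : ℕ) (R : Type*) [CommRing R] : Type _ := GlIdx n →₀ R

variable (n : ℕ) (R : Type*) [CommRing R] [Invertible (2 : R)] (ε : R)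

noncomputable def xE (i j : Fin n) (h : i ≠ j) : Gl n R := Finsupp.single (Sum.inl ⟨(i, j), h⟩) 1
noncomputable def aE (i : Fin n) : Gl n R := Finsupp.single (Sum.inr (Sum.inl i)) 1
noncomputable def bE (i : Fin n) : Gl n R := Finsupp.single (Sum.inr (Sum.inr i)) 1
noncomputable def xe (i j : Fin n) : Gl n R := if h : i ≠ j then xE n R i j h else 0
def lam (n : ℕ) (i j : Fin n) : ℕ := (j - i : Fin n).val

/-- The bracket of `gl_{n+}^ε` on basis elements. -/
noncomputable def bbE : GlIdx n → GlIdx n → Gl n R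
  | Sum.inl ⟨(i, j), _⟩, Sum.inl ⟨(k, l), _⟩ =>
      if k = j ∧ l = i then
        (⅟(2 : R)) • (bE n R i - bE n R j) + (ε * ⅟(2 : R)) • (aE n R i - aE n R j)
      else
        (if lam n i j + lam n k l < n then (1 : R) else ε) •
          ((if j = k then xe n R i l else 0) - (if l = i then xe n R k j else 0))
  | Sum.inr (Sum.inl i), Sum.inl ⟨(j, k), _⟩ =>
      (((if i = j then 1 else 0) : R) - ((if i = k then 1 else 0) : R)) • xe n R j k
  | Sum.inl ⟨(j, k), _⟩, Sum.inr (Sum.inl i) =>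
      -((((if i = j then 1 else 0) : R) - ((if i = k then 1 else 0) : R)) • xe n R j k)
  | Sum.inr (Sum.inr i), Sum.inl ⟨(j, k), _⟩ =>
      (ε * (((if i = j then 1 else 0) : R) - ((if i = k then 1 else 0) : R))) • xe n R j k
  | Sum.inl ⟨(j, k), _⟩, Sum.inr (Sum.inr i) =>
      -((ε * (((if i = j then 1 else 0) : R) - ((if i = k then 1 else 0) : R))) • xe n R j k)
  | _, _ => 0

/-- The bilinear bracket of `gl_{n+}^ε`. -/
noncomputable def brE : Gl n R →ₗ[R] Gl n R →ₗ[R] Gl n R :=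
  Finsupp.lift (Gl n R →ₗ[R] Gl n R) R (GlIdx n) fun s =>
    Finsupp.lift (Gl n R) R (GlIdx n) fun t => bbE n R ε s t

theorem lie_lie_add_lie_lie_add_lie_lie {L : Type*} [LieRing L] (x y z : L) :
    ⁅⁅x, y⁆, z⁆ + ⁅⁅y, z⁆, x⁆ + ⁅⁅z, x⁆, y⁆ = 0 := by
  rw [← lie_skew ⁅x, y⁆ z, ← lie_skew ⁅y, z⁆ x, ← lie_skew ⁅z, x⁆ y, ← neg_add, ← neg_add,
    lie_jacobi, neg_zero]

abbrev Function.Injective.lieRing {M L : Type*} [AddCommGroup M] [LieRing L] (f : M →+ L)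
    (hf : Function.Injective f) (B : M → M → M) (hB : ∀ u v, f (B u v) = ⁅f u, f v⁆) :
    LieRing M where
  bracket := B
  add_lie x y z := hf <| show f (B (x + y) z) = f (B x z + B y z) by
    rw [hB, map_add, map_add, hB, hB, add_lie]
  lie_add x y z := hf <| show f (B x (y + z)) = f (B x y + B x z) by
    rw [hB, map_add, map_add, hB, hB, lie_add]
  lie_self x := hf <| show f (B x x) = f 0 by rw [hB, lie_self, map_zero]
  leibniz_lie x y z := hf <| show f (B x (B y z)) = f (B (B x y) z + B y (B x z)) by
    rw [map_add, hB, hB, hB, hB, hB, hB, leibniz_lie]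

section

attribute [local instance] LieRing.ofAssociativeRing

theorem Matrix.lie_single_single {m A : Type*} [Fintype m] [DecidableEq m] [Ring A]
    (i j k l : m) (a b : A) :
    ⁅Matrix.single i j a, Matrix.single k l b⁆
      = (if j = k then Matrix.single i l (a * b) else 0)
        - (if l = i then Matrix.single k j (b * a) else 0) := by
  rw [Ring.lie_def]
  by_cases hjk : j = k <;> by_cases hli : l = i <;>
    simp [hjk, hli, Matrix.single_mul_single_same, Matrix.single_mul_single_of_ne]

theorem Matrix.lie_single_diag_single {m A : Type*} [Fintype m] [DecidableEq m] [CommRing A]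
    (i j k : m) (hjk : j ≠ k) (d x : A) :
    ⁅Matrix.single i i d, Matrix.single j k x⁆
      = (if i = j then Matrix.single j k (d * x) else 0)
        - (if i = k then Matrix.single j k (d * x) else 0) := by
  rw [Matrix.lie_single_single]
  by_cases hij : i = j <;> by_cases hik : i = k <;> simp_all [eq_comm, mul_comm]

theorem Matrix.lie_single_diag_single_diag {m A : Type*} [Fintype m] [DecidableEq m] [CommRing A]
    (i j : m) (c d : A) :
    ⁅Matrix.single i i c, Matrix.single j j d⁆ = 0 := by
  rw [Matrix.lie_single_single]
  by_cases h : i = j <;> simp_all [eq_comm, mul_comm]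

section Lam

variable {n : ℕ}

theorem lam_lt (i j : Fin n) : lam n i j < n := (j - i).isLt

theorem lam_eq_zero_iff {i j : Fin n} : lam n i j = 0 ↔ i = j := by
  have : NeZero n := NeZero.of_pos i.pos
  rw [lam, Fin.val_eq_zero_iff, sub_eq_zero, eq_comm]

theorem lam_self (i : Fin n) : lam n i i = 0 := lam_eq_zero_iff.mpr rfl

theorem lam_pos {i j : Fin n} (h : i ≠ j) : 0 < lam n i j :=
  Nat.pos_of_ne_zero (mt lam_eq_zero_iff.mp h)

theorem lam_add_lam_mod (i j l : Fin n) : (lam n i j + lam n j l) % n = lam n i l := by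
  have : NeZero n := NeZero.of_pos i.pos
  rw [lam, lam, lam, add_comm, ← Fin.val_add, sub_add_sub_cancel]

theorem lam_add_lam_of_lt {i j l : Fin n} (h : lam n i j + lam n j l < n) :
    lam n i j + lam n j l = lam n i l := by
  rw [← lam_add_lam_mod i j l, Nat.mod_eq_of_lt h]

theorem lam_add_lam_of_le {i j l : Fin n} (h : n ≤ lam n i j + lam n j l) :
    lam n i j + lam n j l = lam n i l + n := by
  have := lam_lt i j
  have := lam_lt j l
  rw [← lam_add_lam_mod i j l, Nat.mod_eq_sub_mod h, Nat.mod_eq_of_lt (by omega)]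
  omega

theorem lam_add_lam_swap {i j : Fin n} (h : i ≠ j) : lam n i j + lam n j i = n := by
  by_cases hlt : lam n i j + lam n j i < n
  · have := lam_add_lam_of_lt hlt
    rw [lam_self] at this
    have := lam_pos h
    omega
  · simpa [lam_self] using lam_add_lam_of_le (not_lt.mp hlt)

end Lam

namespace GlPlus

open Polynomial

section CoeffRing

variable (R : Type*) [CommRing R] (n : ℕ) (ε : R)

abbrev CoeffRing : Type _ := AdjoinRoot (X ^ (n + 1) - C ε * X : R[X])

noncomputable def t : CoeffRing R n ε := AdjoinRoot.root _

noncomputable def u : CoeffRing R n ε := (2 : R) • t R n ε ^ n - algebraMap R _ ε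

variable {R n ε}

theorem t_pow_succ : t R n ε ^ (n + 1) = ε • t R n ε := by
  have h := AdjoinRoot.eval₂_root (X ^ (n + 1) - C ε * X : R[X])
  rw [eval₂_sub, eval₂_pow, eval₂_mul, eval₂_C, eval₂_X, sub_eq_zero] at h
  rw [t, h, Algebra.smul_def, AdjoinRoot.algebraMap_eq]

theorem t_pow_add {r : ℕ} (hr : 0 < r) : t R n ε ^ (n + r) = ε • t R n ε ^ r := by
  obtain ⟨m, rfl⟩ := Nat.exists_eq_add_one_of_ne_zero hr.ne'
  rw [show n + (m + 1) = n + 1 + m by omega, pow_add, t_pow_succ, smul_mul_assoc, ← pow_succ']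

theorem u_mul_t_pow {r : ℕ} (hr : 0 < r) : u R n ε * t R n ε ^ r = ε • t R n ε ^ r := by
  rw [u, sub_mul, smul_mul_assoc, ← pow_add, t_pow_add hr, smul_smul, ← Algebra.smul_def,
    ← sub_smul]
  congr 1
  ring

theorem invOf_two_smul_u_add [Invertible (2 : R)] :
    ⅟(2 : R) • u R n ε + (ε * ⅟(2 : R)) • 1 = t R n ε ^ n := by
  rw [u, smul_sub, smul_smul, invOf_mul_self, one_smul, Algebra.algebraMap_eq_smul_one,
    smul_smul, mul_comm (⅟(2 : R)) ε, sub_add_cancel]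

theorem t_pow_lam_mul_t_pow_lam {i j l : Fin n} (hil : i ≠ l) :
    t R n ε ^ lam n i j * t R n ε ^ lam n j l
      = (if lam n i j + lam n j l < n then (1 : R) else ε) • t R n ε ^ lam n i l := by
  rw [← pow_add]
  split_ifs with h
  · rw [lam_add_lam_of_lt h, one_smul]
  · rw [lam_add_lam_of_le (not_lt.mp h), Nat.add_comm _ n, t_pow_add (lam_pos hil)]

theorem t_pow_lam_mul_t_pow_lam_swap {i j : Fin n} (hij : i ≠ j) :
    t R n ε ^ lam n i j * t R n ε ^ lam n j i = t R n ε ^ n := by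
  rw [← pow_add, lam_add_lam_swap hij]

variable (ε) in
theorem degree_C_mul_X_lt (hn : 0 < n) : (C ε * X : R[X]).degree < (n + 1 : ℕ) :=
  (degree_C_mul_X_le ε).trans_lt (mod_cast Nat.succ_lt_succ hn)

variable (ε) in
theorem monic_X_pow_succ_sub (hn : 0 < n) : (X ^ (n + 1) - C ε * X : R[X]).Monic :=
  monic_X_pow_sub (degree_C_mul_X_lt ε hn)

variable (ε) in
theorem degree_X_pow_succ_sub [Nontrivial R] (hn : 0 < n) :
    (X ^ (n + 1) - C ε * X : R[X]).degree = (n + 1 : ℕ) := by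
  rw [degree_sub_eq_left_of_degree_lt] <;> rw [degree_X_pow]
  exact degree_C_mul_X_lt ε hn

variable (R n ε) in
noncomputable def coord (hn : 0 < n) (k : ℕ) : CoeffRing R n ε →ₗ[R] R :=
  (lcoeff R k).comp (AdjoinRoot.modByMonicHom (monic_X_pow_succ_sub ε hn))

theorem coord_t_pow [Nontrivial R] (hn : 0 < n) (k : ℕ) {m : ℕ} (hm : m ≤ n) :
    coord R n ε hn k (t R n ε ^ m) = if k = m then 1 else 0 := by
  rw [coord, LinearMap.comp_apply, t, ← AdjoinRoot.mk_X, ← map_pow, AdjoinRoot.modByMonicHom_mk,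
    (modByMonic_eq_self_iff (monic_X_pow_succ_sub ε hn)).mpr, lcoeff_apply, coeff_X_pow]
  rw [degree_X_pow, degree_X_pow_succ_sub ε hn]
  exact_mod_cast Nat.lt_succ_of_le hm

theorem coord_one [Nontrivial R] (hn : 0 < n) (k : ℕ) :
    coord R n ε hn k 1 = if k = 0 then 1 else 0 := by
  simpa using coord_t_pow (ε := ε) hn k (Nat.zero_le n)

theorem coord_u [Nontrivial R] (hn : 0 < n) (k : ℕ) :
    coord R n ε hn k (u R n ε) = 2 * (if k = n then 1 else 0) - ε * (if k = 0 then 1 else 0) := by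
  rw [u, Algebra.algebraMap_eq_smul_one, map_sub, LinearMap.map_smul, LinearMap.map_smul,
    coord_t_pow hn k le_rfl, coord_one, smul_eq_mul, smul_eq_mul]

end CoeffRing

section Embedding

variable (R : Type*) [CommRing R] (n : ℕ) (ε : R)

local notation "𝔐" => Matrix (Fin n) (Fin n) (CoeffRing R n ε)

noncomputable def basisImage : GlIdx n → 𝔐
  | Sum.inl p => Matrix.single p.1.1 p.1.2 (t R n ε ^ lam n p.1.1 p.1.2)
  | Sum.inr (Sum.inl i) => Matrix.single i i 1
  | Sum.inr (Sum.inr i) => Matrix.single i i (u R n ε)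

noncomputable def embed : Gl n R →ₗ[R] 𝔐 := Finsupp.linearCombination R (basisImage R n ε)

variable {R n ε}

theorem embed_xe {i j : Fin n} (h : i ≠ j) :
    embed R n ε (xe n R i j) = Matrix.single i j (t R n ε ^ lam n i j) := by
  rw [xe, dif_pos h, xE, embed, Finsupp.linearCombination_single, one_smul, basisImage]

theorem embed_aE (i : Fin n) : embed R n ε (aE n R i) = Matrix.single i i 1 := by
  rw [aE, embed, Finsupp.linearCombination_single, one_smul, basisImage]

theorem embed_bE (i : Fin n) : embed R n ε (bE n R i) = Matrix.single i i (u R n ε) := by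
  rw [bE, embed, Finsupp.linearCombination_single, one_smul, basisImage]

theorem lie_single_diag_basisImage_inl (d : CoeffRing R n ε) (c : R) (i j k : Fin n)
    (hjk : j ≠ k) (hd : d * t R n ε ^ lam n j k = c • t R n ε ^ lam n j k) :
    ⁅Matrix.single i i d, basisImage R n ε (Sum.inl ⟨(j, k), hjk⟩)⁆
      = c • embed R n ε
          (((if i = j then 1 else 0) - (if i = k then 1 else 0) : R) • xe n R j k) := by
  rw [basisImage, Matrix.lie_single_diag_single _ _ _ hjk, hd, LinearMap.map_smul, embed_xe hjk,
    ← Matrix.smul_single]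
  by_cases hij : i = j <;> by_cases hik : i = k <;> simp [hij, hik, hjk, hjk.symm]

variable [Invertible (2 : R)]

theorem embed_bbE_inl_inl {i j k l : Fin n} (hij : i ≠ j) (hkl : k ≠ l) :
    embed R n ε (bbE n R ε (Sum.inl ⟨(i, j), hij⟩) (Sum.inl ⟨(k, l), hkl⟩))
      = ⁅basisImage R n ε (Sum.inl ⟨(i, j), hij⟩), basisImage R n ε (Sum.inl ⟨(k, l), hkl⟩)⁆ := by
  simp only [basisImage]
  rw [Matrix.lie_single_single]
  by_cases hc : k = j ∧ l = i
  · obtain ⟨rfl, rfl⟩ := hc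
    have hdiag (m : Fin n) : ⅟(2 : R) • (Matrix.single m m (u R n ε) : 𝔐)
        + (ε * ⅟(2 : R)) • Matrix.single m m 1 = Matrix.single m m (t R n ε ^ n) := by
      rw [Matrix.smul_single, Matrix.smul_single, ← Matrix.single_add, invOf_two_smul_u_add]
    simp only [bbE, and_self, if_true, map_add, map_sub, LinearMap.map_smul, embed_aE, embed_bE,
      t_pow_lam_mul_t_pow_lam_swap hij, t_pow_lam_mul_t_pow_lam_swap hkl, ← hdiag]
    module
  · simp only [bbE, hc, if_false, LinearMap.map_smul, map_sub]
    by_cases hjk : j = k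
    · subst hjk
      have hil : i ≠ l := fun h => hc ⟨rfl, h.symm⟩
      simp only [if_true, if_neg hil.symm, map_zero, sub_zero, embed_xe hil,
        t_pow_lam_mul_t_pow_lam hil, Matrix.smul_single]
    · by_cases hli : l = i
      · subst hli
        have hkj : k ≠ j := fun h => hjk h.symm
        simp only [if_neg hjk, if_true, map_zero, zero_sub, embed_xe hkj, smul_neg,
          t_pow_lam_mul_t_pow_lam hkj, Matrix.smul_single, Nat.add_comm (lam n k l)]
      · simp [hjk, hli]

theorem embed_bbE_inr_inl_inl (i j k : Fin n) (hjk : j ≠ k) :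
    embed R n ε (bbE n R ε (Sum.inr (Sum.inl i)) (Sum.inl ⟨(j, k), hjk⟩))
      = ⁅basisImage R n ε (Sum.inr (Sum.inl i)), basisImage R n ε (Sum.inl ⟨(j, k), hjk⟩)⁆ := by
  rw [basisImage.eq_2, lie_single_diag_basisImage_inl 1 1 i j k hjk (by rw [one_mul, one_smul]),
    one_smul]
  rfl

theorem embed_bbE_inr_inr_inl (i j k : Fin n) (hjk : j ≠ k) :
    embed R n ε (bbE n R ε (Sum.inr (Sum.inr i)) (Sum.inl ⟨(j, k), hjk⟩))
      = ⁅basisImage R n ε (Sum.inr (Sum.inr i)), basisImage R n ε (Sum.inl ⟨(j, k), hjk⟩)⁆ := by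
  rw [basisImage.eq_3, lie_single_diag_basisImage_inl _ ε i j k hjk (u_mul_t_pow (lam_pos hjk)),
    ← LinearMap.map_smul, smul_smul]
  rfl

theorem embed_bbE (s s' : GlIdx n) :
    embed R n ε (bbE n R ε s s') = ⁅basisImage R n ε s, basisImage R n ε s'⁆ := by
  obtain (⟨⟨i, j⟩, hij⟩ | i | i) := s <;> obtain (⟨⟨k, l⟩, hkl⟩ | k | k) := s'
  · exact embed_bbE_inl_inl hij hkl
  · rw [← lie_skew, ← embed_bbE_inr_inl_inl, ← map_neg]; rfl
  · rw [← lie_skew, ← embed_bbE_inr_inr_inl, ← map_neg]; rfl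
  · exact embed_bbE_inr_inl_inl i k l hkl
  · exact (map_zero _).trans (Matrix.lie_single_diag_single_diag i k _ _).symm
  · exact (map_zero _).trans (Matrix.lie_single_diag_single_diag i k _ _).symm
  · exact embed_bbE_inr_inr_inl i k l hkl
  · exact (map_zero _).trans (Matrix.lie_single_diag_single_diag i k _ _).symm
  · exact (map_zero _).trans (Matrix.lie_single_diag_single_diag i k _ _).symm

theorem embed_brE (v w : Gl n R) :
    embed R n ε (brE n R ε v w) = ⁅embed R n ε v, embed R n ε w⁆ := by
  induction v using Finsupp.induction_linear with
  | zero => simp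
  | add v₁ v₂ h₁ h₂ => simp only [map_add, LinearMap.add_apply, h₁, h₂, add_lie]
  | single s c =>
    induction w using Finsupp.induction_linear with
    | zero => simp
    | add w₁ w₂ h₁ h₂ => simp only [map_add, h₁, h₂, lie_add]
    | single s' c' =>
      have hbr : brE n R ε (Finsupp.single s c) (Finsupp.single s' c')
          = c • c' • bbE n R ε s s' := by
        simp [brE]
      rw [hbr, LinearMap.map_smul, LinearMap.map_smul, embed_bbE, embed,
        Finsupp.linearCombination_single, Finsupp.linearCombination_single, smul_lie, lie_smul]

variable (R ε) in
-- The diagonal entry of the image of `c • a_i + c' • b_i` is `(c - ε c') + 2 c' t ^ n`.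
noncomputable def basisCoord (hn : 0 < n) : GlIdx n → (𝔐 →ₗ[R] R)
  | Sum.inl p =>
      (coord R n ε hn (lam n p.1.1 p.1.2)).comp (Matrix.entryLinearMap R _ p.1.1 p.1.2)
  | Sum.inr (Sum.inl i) =>
      (coord R n ε hn 0 + (ε * ⅟(2 : R)) • coord R n ε hn n).comp (Matrix.entryLinearMap R _ i i)
  | Sum.inr (Sum.inr i) => (⅟(2 : R) • coord R n ε hn n).comp (Matrix.entryLinearMap R _ i i)

theorem basisCoord_basisImage [Nontrivial R] (hn : 0 < n) (s s' : GlIdx n) :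
    basisCoord R ε hn s (basisImage R n ε s') = if s' = s then 1 else 0 := by
  obtain (⟨⟨i, j⟩, hij⟩ | i | i) := s <;> obtain (⟨⟨k, l⟩, hkl⟩ | k | k) := s' <;>
    simp only [basisCoord, basisImage, LinearMap.comp_apply, Matrix.entryLinearMap_apply,
      Matrix.single_apply]
  all_goals split_ifs <;>
    simp_all [coord_t_pow hn _ (lam_lt _ _).le, coord_one, coord_u, lam_eq_zero_iff,
      (lam_lt _ _).ne, hn.ne, hn.ne']

theorem basisCoord_comp_embed [Nontrivial R] (hn : 0 < n) (s : GlIdx n) :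
    (basisCoord R ε hn s).comp (embed R n ε) = Finsupp.lapply s := by
  refine Finsupp.lhom_ext fun s' c => ?_
  rw [LinearMap.comp_apply, embed, Finsupp.linearCombination_single, LinearMap.map_smul,
    basisCoord_basisImage, Finsupp.lapply_apply, Finsupp.single_apply, smul_eq_mul, mul_ite,
    mul_one, mul_zero]

theorem embed_injective : Function.Injective (embed R n ε) := by
  rcases subsingleton_or_nontrivial R with hR | hR
  · exact Function.injective_of_subsingleton _
  rcases Nat.eq_zero_or_pos n with rfl | hn
  · exact Function.injective_of_subsingleton _
  intro v w h
  ext s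
  have := congrArg (basisCoord R ε hn s) h
  rwa [← LinearMap.comp_apply, ← LinearMap.comp_apply, basisCoord_comp_embed] at this

variable (R n ε) in
noncomputable abbrev lieRing : LieRing (Gl n R) :=
  embed_injective.lieRing (embed R n ε).toAddMonoidHom (fun u v => brE n R ε u v) embed_brE

end Embedding

end GlPlus

end

theorem stmt15_general (n : ℕ) (R : Type*) [CommRing R] [Invertible (2 : R)] (ε : R) :
    (∀ u : Gl n R, brE n R ε u u = 0) ∧
    (∀ u v w : Gl n R,
      brE n R ε (brE n R ε u v) w + brE n R ε (brE n R ε v w) u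
        + brE n R ε (brE n R ε w u) v = 0) ∧
    ∃ inst : LieRing (Gl n R),
      inst.toAddCommGroup = (inferInstance : AddCommGroup (Gl n R)) ∧
      ∀ u v : Gl n R, @Bracket.bracket _ _ inst.toBracket u v = brE n R ε u v := by
  let inst := GlPlus.lieRing R n ε
  exact ⟨lie_self, lie_lie_add_lie_lie_add_lie_lie, inst, rfl, fun _ _ => rfl⟩

/-- the bilinear bracket of `gl_{n+}^ε` is alternating and satisfies the
Jacobi identity; consequently `gl_{n+}^ε`, with this bracket, is a Lie algebra over `R`. -/
theorem stmt15 (n : ℕ) (hn : 2 ≤ n) (R : Type*) [CommRing R] [Invertible (2 : R)] (ε : R) :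
    (∀ u : Gl n R, brE n R ε u u = 0) ∧
    (∀ u v w : Gl n R,
      brE n R ε (brE n R ε u v) w + brE n R ε (brE n R ε v w) u
        + brE n R ε (brE n R ε w u) v = 0) ∧
    ∃ inst : LieRing (Gl n R),
      inst.toAddCommGroup = (inferInstance : AddCommGroup (Gl n R)) ∧
      ∀ u v : Gl n R, @Bracket.bracket _ _ inst.toBracket u v = brE n R ε u v :=
  stmt15_general n R ε
end

section
/- Let ψ be the cyclic permutation of {1,…,n} given by ψ(i) = i+1 for i < n and ψ(n) = 1. The R-linear map Ψ : gl_{n+}^ε → gl_{n+}^ε determined on the basis by Ψ(x_{ij}) = x_{ψ(i)ψ(j)}, Ψ(a_i) = a_{ψ(i)}, Ψ(b_i) = b_{ψ(i)} is a Lie algebra automorphism of gl_{n+}^ε. -/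
variable (n : ℕ) (R : Type*) [CommRing R] [Invertible (2 : R)] (ε : R)

/-- `Ψ` for `gl_{n+}^ε`: determined on the basis by incrementing all indices by `1` mod `n`. -/
noncomputable def Psi [NeZero n] : Gl n R →ₗ[R] Gl n R :=
  Finsupp.lift (Gl n R) R (GlIdx n) fun t =>
    match t with
    | Sum.inl ⟨(i, j), _⟩ => xe n R (i + 1) (j + 1)
    | Sum.inr (Sum.inl i) => aE n R (i + 1)
    | Sum.inr (Sum.inr i) => bE n R (i + 1)

def rotateIdx [NeZero n] (c : Fin n) : GlIdx n ≃ GlIdx n :=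
  Equiv.sumCongr
    (((Equiv.addRight c).prodCongr (Equiv.addRight c)).subtypeEquiv fun p => by simp)
    ((Equiv.addRight c).sumCongr (Equiv.addRight c))

noncomputable def rotate [NeZero n] (c : Fin n) : Gl n R ≃ₗ[R] Gl n R :=
  Finsupp.domLCongr (rotateIdx n c)

section Rotate

variable {n} [NeZero n] (c : Fin n)

omit [Invertible (2 : R)] in
theorem rotate_single (s : GlIdx n) (r : R) :
    rotate n R c (Finsupp.single s r) = Finsupp.single (rotateIdx n c s) r :=
  Finsupp.domLCongr_single _ _ _

omit [Invertible (2 : R)] in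
theorem rotate_xe (i j : Fin n) : rotate n R c (xe n R i j) = xe n R (i + c) (j + c) := by
  by_cases h : i = j
  · simp [xe, h]
  · simp [xe, xE, h, rotate_single, rotateIdx]

omit [Invertible (2 : R)] in
theorem rotate_aE (i : Fin n) : rotate n R c (aE n R i) = aE n R (i + c) :=
  rotate_single R c _ _

omit [Invertible (2 : R)] in
theorem rotate_bE (i : Fin n) : rotate n R c (bE n R i) = bE n R (i + c) :=
  rotate_single R c _ _

theorem lam_add_right (i j : Fin n) : lam n (i + c) (j + c) = lam n i j := by
  simp [lam]

theorem rotate_bbE (s t : GlIdx n) :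
    rotate n R c (bbE n R ε s t) = bbE n R ε (rotateIdx n c s) (rotateIdx n c t) := by
  rcases s with ⟨⟨i, j⟩, hij⟩ | i | i <;> rcases t with ⟨⟨k, l⟩, hkl⟩ | k | k <;>
    simp only [bbE, rotateIdx, Equiv.sumCongr_apply, Sum.map_inl, Sum.map_inr,
      Equiv.subtypeEquiv_apply, Equiv.prodCongr_apply, Prod.map, Equiv.coe_addRight,
      lam_add_right, add_left_inj, map_zero] <;>
    split_ifs <;>
    simp [rotate_xe, rotate_aE, rotate_bE]

theorem rotate_brE (u v : Gl n R) :
    rotate n R c (brE n R ε u v) = brE n R ε (rotate n R c u) (rotate n R c v) := by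
  suffices h : (brE n R ε).compr₂ (rotate n R c).toLinearMap =
      (brE n R ε).compl₁₂ (rotate n R c).toLinearMap (rotate n R c).toLinearMap from
    congr($h u v)
  ext s t
  simp [brE, rotate_single, rotate_bbE]

end Rotate

omit [Invertible (2 : R)] in
theorem Psi_eq_rotate_one [NeZero n] : Psi n R = (rotate n R 1).toLinearMap := by
  refine Finsupp.lhom_ext fun s r => ?_
  rcases s with ⟨⟨i, j⟩, h : i ≠ j⟩ | i | i
  · simp [Psi, rotate_single, rotateIdx, xe, xE, h]
  · simp [Psi, rotate_single, rotateIdx, aE]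
  · simp [Psi, rotate_single, rotateIdx, bE]

theorem stmt16_general (n : ℕ) [NeZero n] (R : Type*) [CommRing R] [Invertible (2 : R)]
    (ε : R) :
    Function.Bijective (Psi n R) ∧
    ∀ u v : Gl n R, Psi n R (brE n R ε u v) = brE n R ε (Psi n R u) (Psi n R v) := by
  rw [Psi_eq_rotate_one]
  exact ⟨(rotate n R 1).bijective, rotate_brE R ε 1⟩

/-- `Ψ` is a Lie algebra automorphism of `gl_{n+}^ε`. -/
theorem stmt16 (n : ℕ) [NeZero n] (hn : 2 ≤ n) (R : Type*) [CommRing R] [Invertible (2 : R)]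
    (ε : R) :
    Function.Bijective (Psi n R) ∧
    ∀ u v : Gl n R, Psi n R (brE n R ε u v) = brE n R ε (Psi n R u) (Psi n R v) :=
  stmt16_general n R ε
end
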